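/- Given positive constants d̲_s ≤ d̄_s, d_a, d_b, v̄, d_r with √2 d̲_s > d_a, v̄ > 2d_r, and (2d̲_s² - d_a²)/(2(d̄_s + d_b/2)²) > 1 - (v̄ - 2d_r)²/(2(v̄ - d_r)²), define c* = ((2d̄_s + d_b)² - 4d̲_s² + 2d_a²)/(2(2d̄_s + d_b)²). Then there exists c₀ ∈ (0,1) with c₀ > √(c*) + √(c* + d_r/(v̄ - d_r)). -/
import Mathlib

theorem existence_of_c0 (dls dus da db vbar dr : ℝ)
    (hdls : 0 < dls) (hdus : dls ≤ dus) (hda : 0 < da) (hdb : 0 < db) (hdr : 0 < dr)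
    (h1 : da < Real.sqrt 2 * dls)
    (h2 : 2 * dr < vbar)
    (h3 : 1 - (vbar - 2 * dr) ^ 2 / (2 * (vbar - dr) ^ 2)
          < (2 * dls ^ 2 - da ^ 2) / (2 * (dus + db / 2) ^ 2)) :
    ∃ c₀ : ℝ, 0 < c₀ ∧ c₀ < 1 ∧
      Real.sqrt (((2 * dus + db) ^ 2 - 4 * dls ^ 2 + 2 * da ^ 2) / (2 * (2 * dus + db) ^ 2))
        + Real.sqrt (((2 * dus + db) ^ 2 - 4 * dls ^ 2 + 2 * da ^ 2) / (2 * (2 * dus + db) ^ 2)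
            + dr / (vbar - dr)) < c₀ := by
  have hv : 0 < vbar - dr := by linarith
  have hv2 : 0 < vbar - 2 * dr := by linarith
  have hD : 0 < 2 * dus + db := by linarith
  have key : ((2 * dus + db) ^ 2 - 4 * dls ^ 2 + 2 * da ^ 2) / (2 * (2 * dus + db) ^ 2)
      < ((vbar - 2 * dr) / (2 * (vbar - dr))) ^ 2 := by
    have hS : (0:ℝ) < 2 * (dus + db / 2) ^ 2 := by
      have : (0:ℝ) < dus + db / 2 := by linarith
      positivity
    have hQ : (0:ℝ) < 2 * (vbar - dr) ^ 2 := by nlinarith [sq_nonneg (vbar - dr)]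
    rw [div_pow, div_lt_div_iff₀ (by nlinarith [sq_nonneg (2 * dus + db)] :
      (0:ℝ) < 2 * (2 * dus + db) ^ 2) (by nlinarith [sq_nonneg (vbar - dr)] :
      (0:ℝ) < (2 * (vbar - dr)) ^ 2)]
    have hre : 1 - (vbar - 2 * dr) ^ 2 / (2 * (vbar - dr) ^ 2)
        = (2 * (vbar - dr) ^ 2 - (vbar - 2 * dr) ^ 2) / (2 * (vbar - dr) ^ 2) := by
      field_simp
    rw [hre, div_lt_div_iff₀ hQ hS] at h3
    nlinarith [h3, sq_nonneg (vbar - dr), mul_pos hQ hS]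
  have heq : (vbar / (2 * (vbar - dr))) ^ 2
      = ((vbar - 2 * dr) / (2 * (vbar - dr))) ^ 2 + dr / (vbar - dr) := by
    field_simp
    ring
  have key2 : ((2 * dus + db) ^ 2 - 4 * dls ^ 2 + 2 * da ^ 2) / (2 * (2 * dus + db) ^ 2)
      + dr / (vbar - dr) < (vbar / (2 * (vbar - dr))) ^ 2 := by
    rw [heq]; linarith
  have s1 := (Real.sqrt_lt' (div_pos hv2 (by linarith))).mpr key
  have s2 := (Real.sqrt_lt' (div_pos (by linarith) (by linarith))).mpr key2
  have hone : (vbar - 2 * dr) / (2 * (vbar - dr)) + vbar / (2 * (vbar - dr)) = 1 := by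
    field_simp
    ring
  refine ⟨(Real.sqrt (((2 * dus + db) ^ 2 - 4 * dls ^ 2 + 2 * da ^ 2) / (2 * (2 * dus + db) ^ 2))
        + Real.sqrt (((2 * dus + db) ^ 2 - 4 * dls ^ 2 + 2 * da ^ 2) / (2 * (2 * dus + db) ^ 2)
            + dr / (vbar - dr)) + 1) / 2, ?_, ?_, ?_⟩
  · have := Real.sqrt_nonneg (((2 * dus + db) ^ 2 - 4 * dls ^ 2 + 2 * da ^ 2) / (2 * (2 * dus + db) ^ 2))
    have := Real.sqrt_nonneg (((2 * dus + db) ^ 2 - 4 * dls ^ 2 + 2 * da ^ 2) / (2 * (2 * dus + db) ^ 2)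
            + dr / (vbar - dr))
    linarith
  · linarith
  · linarith
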